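/- arXiv:2401.05937 — 6 statements merged into one kernel-verified Lean document; each statement's English description precedes it below -/
import Mathlib

section
/- Let G be a profinite group and let X be a closed subgroup of G. Then X is open in G if and only if the set of closed subgroups of G that contain X is finite. -/
/-!
An open subgroup of a compact group has finite index, and a subgroup containing it is a union
of its cosets, so there are only finitely many. Conversely, in a profinite group a closed
subgroup is the intersection of the open subgroups containing it; these are closed, so if
there are finitely many, the intersection is open.
-/

open scoped Pointwise

namespace Subgroup

variable {G : Type*} [Group G]

theorem preimage_image_mk_eq_of_le {H K : Subgroup G} (h : H ≤ K) :
    QuotientGroup.mk ⁻¹' ((QuotientGroup.mk : G → G ⧸ H) '' K) = K := by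
  rw [QuotientGroup.preimage_image_mk_eq_mul]
  exact ((Set.mul_subset_mul_left h).trans_eq K.coe_mul_self_eq).antisymm
    (Set.subset_mul_left _ H.one_mem)

theorem finite_setOf_le_of_finite_quotient (H : Subgroup G) [Finite (G ⧸ H)] :
    {K : Subgroup G | H ≤ K}.Finite := by
  refine Set.Finite.of_finite_image (f := fun K : Subgroup G ↦ ((↑) : G → G ⧸ H) '' K)
    (Set.toFinite _) fun K₁ h₁ K₂ h₂ h ↦ SetLike.coe_injective ?_
  rw [← preimage_image_mk_eq_of_le h₁, ← preimage_image_mk_eq_of_le h₂]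
  exact congrArg _ h

variable [TopologicalSpace G] [IsTopologicalGroup G] [CompactSpace G]

theorem isOpen_of_finite_setOf_isOpen_le [TotallyDisconnectedSpace G] {X : Subgroup G}
    (hX : IsClosed (X : Set G)) (hfin : {N : Subgroup G | IsOpen (N : Set G) ∧ X ≤ N}.Finite) :
    IsOpen (X : Set G) := by
  have hX_eq : (X : Set G) = ⋂ N ∈ {N : Subgroup G | IsOpen (N : Set G) ∧ X ≤ N}, (N : Set G) := by
    rw [← coe_sInf]
    exact congrArg _ (ProfiniteGrp.closedSubgroup_eq_sInf_open ⟨X, hX⟩)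
  exact hX_eq ▸ hfin.isOpen_biInter fun N hN ↦ hN.1

end Subgroup

theorem closed_subgroup_isOpen_iff_finite_closed_oversubgroups_general
    {G : Type*} [Group G] [TopologicalSpace G] [IsTopologicalGroup G]
    [CompactSpace G] [TotallyDisconnectedSpace G]
    (X : Subgroup G) (hX : IsClosed (X : Set G)) :
    IsOpen (X : Set G) ↔ {Y : Subgroup G | IsClosed (Y : Set G) ∧ X ≤ Y}.Finite := by
  refine ⟨fun hopen ↦ ?_, fun hfin ↦ ?_⟩
  · have := X.quotient_finite_of_isOpen hopen
    exact X.finite_setOf_le_of_finite_quotient.subset fun Y hY ↦ hY.2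
  · exact Subgroup.isOpen_of_finite_setOf_isOpen_le hX
      (hfin.subset fun Y hY ↦ ⟨Y.isClosed_of_isOpen hY.1, hY.2⟩)

/-- Let `G` be a profinite group and let `X` be a closed subgroup of `G`.
Then `X` is open in `G` if and only if the set of closed subgroups of `G`
that contain `X` is finite. -/
theorem closed_subgroup_isOpen_iff_finite_closed_oversubgroups
    {G : Type*} [Group G] [TopologicalSpace G] [IsTopologicalGroup G]
    [CompactSpace G] [T2Space G] [TotallyDisconnectedSpace G]
    (X : Subgroup G) (hX : IsClosed (X : Set G)) :
    IsOpen (X : Set G) ↔ {Y : Subgroup G | IsClosed (Y : Set G) ∧ X ≤ Y}.Finite :=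
  closed_subgroup_isOpen_iff_finite_closed_oversubgroups_general X hX
end

section
/- Let G be a profinite group, let H be a closed subgroup of G, and let (U_i)_{i ∈ I} be a nonempty family of closed subgroups of G that is filtered from below, i.e., for all i, j ∈ I there exists k ∈ I with U_k ⊆ U_i ∩ U_j. Let U = ⋂_{i ∈ I} U_i. If the product set UH = {uh : u ∈ U, h ∈ H} is open in G, then there exists i ∈ I such that UH = U_iH (as subsets of G). -/
/-!
The sets `U i * H` are closed and decrease along the filtered family. Their intersection is
`(⋂ i, U i) * H`: if `x ∈ U i * H` for every `i`, the compact set `x • H⁻¹` meets every `U i`,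
hence meets their intersection. An open set containing the intersection of a directed family
of closed sets in a compact space already contains one member of the family.
-/

open scoped Pointwise

section

variable {G : Type*} [Group G] [TopologicalSpace G] [IsTopologicalGroup G]

theorem iInter_mul_of_directed_isClosed_of_isCompact {ι : Type*} [Nonempty ι] {S : ι → Set G}
    (hS : Directed (· ⊇ ·) S) (hS_closed : ∀ i, IsClosed (S i)) {K : Set G}
    (hK : IsCompact K) : ⋂ i, S i * K = (⋂ i, S i) * K := by
  refine Set.Subset.antisymm (fun x hx => ?_) (Set.subset_iInter fun i =>
    Set.mul_subset_mul_right (Set.iInter_subset S i))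
  have hmeets : ∀ i, (x • K⁻¹ ∩ S i).Nonempty := by
    intro i
    obtain ⟨s, hs, k, hk, rfl⟩ := Set.mem_iInter.1 hx i
    exact ⟨s, ⟨k⁻¹, by simpa using hk, by simp [smul_eq_mul, mul_assoc]⟩, hs⟩
  by_contra hx'
  have hdisj : x • K⁻¹ ∩ ⋂ i, S i = ∅ := by
    refine Set.eq_empty_iff_forall_notMem.2 ?_
    rintro s ⟨⟨k, hk, rfl⟩, hs⟩
    exact hx' ⟨x • k, hs, k⁻¹, hk, by simp [smul_eq_mul, mul_assoc]⟩
  obtain ⟨i, hi⟩ := (hK.inv.smul x).elim_directed_family_closed S hS_closed hdisj hS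
  exact (hmeets i).ne_empty hi

end

theorem eq_of_filtered_inter_mul_isOpen_general
    {G : Type*} [Group G] [TopologicalSpace G] [IsTopologicalGroup G]
    [CompactSpace G]
    (H : Subgroup G) (hH : IsClosed (H : Set G))
    {I : Type*} [Nonempty I] (U : I → Subgroup G)
    (hU : ∀ i, IsClosed ((U i : Subgroup G) : Set G))
    (hfil : ∀ i j, ∃ k, U k ≤ U i ⊓ U j) :
    IsOpen (((⨅ i, U i : Subgroup G) : Set G) * (H : Set G)) →
      ∃ i, ((⨅ i, U i : Subgroup G) : Set G) * (H : Set G) = (U i : Set G) * (H : Set G) := by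
  intro hopen
  have hdir : Directed (· ⊇ ·) fun i => (U i : Set G) := fun i j =>
    (hfil i j).imp fun _ hk => ⟨fun _ hx => (hk hx).1, fun _ hx => (hk hx).2⟩
  have hinter :
      ⋂ i, (U i : Set G) * (H : Set G) = ((⨅ i, U i : Subgroup G) : Set G) * (H : Set G) := by
    rw [Subgroup.coe_iInf]
    exact iInter_mul_of_directed_isClosed_of_isCompact hdir hU hH.isCompact
  obtain ⟨i, hi⟩ := exists_subset_nhds_of_compactSpace
    (hdir.mono_comp _ fun _ _ h => Set.mul_subset_mul_right h)
    (fun i => hH.mul_left_of_isCompact (hU i).isCompact)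
    (fun x hx => hopen.mem_nhds (hinter ▸ hx))
  exact ⟨i, Set.Subset.antisymm
    (Set.mul_subset_mul_right (SetLike.coe_subset_coe.2 (iInf_le U i))) hi⟩

/-- Let `G` be a profinite group, `H` a closed subgroup of `G`, and
`(U i)_{i ∈ I}` a nonempty family of closed subgroups of `G` filtered from below.
If the product set `(⋂ i, U i) * H` is open in `G`, then it equals `U i * H` for some `i`. -/
theorem eq_of_filtered_inter_mul_isOpen
    {G : Type*} [Group G] [TopologicalSpace G] [IsTopologicalGroup G]
    [CompactSpace G] [T2Space G] [TotallyDisconnectedSpace G]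
    (H : Subgroup G) (hH : IsClosed (H : Set G))
    {I : Type*} [Nonempty I] (U : I → Subgroup G)
    (hU : ∀ i, IsClosed ((U i : Subgroup G) : Set G))
    (hfil : ∀ i j, ∃ k, U k ≤ U i ⊓ U j) :
    IsOpen (((⨅ i, U i : Subgroup G) : Set G) * (H : Set G)) →
      ∃ i, ((⨅ i, U i : Subgroup G) : Set G) * (H : Set G) = (U i : Set G) * (H : Set G) :=
  eq_of_filtered_inter_mul_isOpen_general H hH U hU hfil
end

section
/- Let G be a profinite group. The poset of closed subgroups of G (ordered by inclusion) is directly decomposable if and only if there exist nontrivial closed normal subgroups G₁ and G₂ of G such that G₁ ∩ G₂ = {1}, G₁G₂ = G, and π*(G₁) ∩ π*(G₂) = ∅. -/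
open scoped Pointwise

universe u

/-- A poset is directly decomposable if it is order-isomorphic to the product of two
partially ordered sets each having at least two elements. -/
def DirectlyDecomposable (P : Type u) [PartialOrder P] : Prop :=
  ∃ (α β : Type u) (_ : PartialOrder α) (_ : PartialOrder β),
    Nontrivial α ∧ Nontrivial β ∧ Nonempty (P ≃o α × β)

/-- For a profinite group `K`, `piStar K` is the set of primes `p` such that `p` divides the
order of the finite quotient `K/N` for some open normal subgroup `N` of `K`. -/
def piStar (K : Type*) [Group K] [TopologicalSpace K] : Set ℕ :=
  {p | p.Prime ∧ ∃ N : Subgroup K, N.Normal ∧ IsOpen (N : Set K) ∧ p ∣ N.index}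

/-!
Write `⟨x⟩‾` for the closed subgroup topologically generated by `x`.

An order isomorphism `L ≃o A × B` of a bounded lattice amounts to a pair `a, b ∈ L` (the images
of `A × {⊥}` and `{⊥} × B`) along which `x ↦ (x ⊓ a, x ⊓ b)` identifies `L` with
`Iic a × Iic b`.

For closed subgroups, given such a pair `G₁, G₂`, every `g` is a product `uv` with `u ∈ G₁`,
`v ∈ G₂` inside the abelian group `⟨g⟩‾`, and `G₁ ⊓ G₂ = 1`. If `p ∈ π*(G₁) ∩ π*(G₂)`, take
pro-`p` elements `x ∈ G₁`, `y ∈ G₂`. Every closed subgroup of `⟨x⟩‾` other than `⟨x⟩‾` lies in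
`⟨x^p⟩‾`, and this forces `⟨xy⟩‾ = ⟨x⟩‾ ⊔ ⟨y⟩‾`. Then `x ∈ ⟨xy⟩‾ ⊆ ⋃_{k<p} x^k ⟨x^p⟩‾ y^k ⟨y^p⟩‾`,
which is impossible since `⟨x⟩‾ ∩ ⟨y⟩‾ = 1`. So elements of `G₁` and `G₂` have coprime orders in
every finite quotient; writing `g w g⁻¹ = uv` with `w ∈ G₁`, the order of `v` divides that of `w`
there, hence `v = 1` and `G₁` is normal.

Conversely, if `G = G₁ × G₂` with `π*(G₁) ∩ π*(G₂) = ∅` and `g₁ g₂` lies in a closed subgroup `X`,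
then in each finite quotient the image of `g₁` is a power of that of `g₁ g₂`, so `g₁ ∈ X`. Hence
`X = (X ⊓ G₁) ⊔ (X ⊓ G₂)`, and `G₁, G₂` is a pair as above.
-/

/-- `L` is the product of `Iic a` and `Iic b` via `x ↦ (x ⊓ a, x ⊓ b)`. -/
structure IsDirectDecomposition {L : Type*} [Lattice L] (a b : L) : Prop where
  inf_sup_inf (x : L) : x ⊓ a ⊔ x ⊓ b = x
  sup_inf_left ⦃u v : L⦄ : u ≤ a → v ≤ b → (u ⊔ v) ⊓ a = u
  sup_inf_right ⦃u v : L⦄ : u ≤ a → v ≤ b → (u ⊔ v) ⊓ b = v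

namespace IsDirectDecomposition

variable {L : Type*} [Lattice L] {a b : L}

theorem symm (h : IsDirectDecomposition a b) : IsDirectDecomposition b a where
  inf_sup_inf x := by rw [sup_comm, h.inf_sup_inf]
  sup_inf_left _ _ hu hv := by rw [sup_comm, h.sup_inf_right hv hu]
  sup_inf_right _ _ hu hv := by rw [sup_comm, h.sup_inf_left hv hu]

theorem inf_eq_bot [OrderBot L] (h : IsDirectDecomposition a b) : a ⊓ b = ⊥ := by
  simpa [inf_comm] using h.sup_inf_left bot_le le_rfl

theorem inf_sup_inf_of_le_sup (h : IsDirectDecomposition a b) {u v z : L} (hu : u ≤ a)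
    (hv : v ≤ b) (hz : z ≤ u ⊔ v) : z ⊓ u ⊔ z ⊓ v = z := by
  have key : ∀ {c w : L}, (u ⊔ v) ⊓ c = w → z ⊓ c = z ⊓ w := fun huv => by
    rw [← huv, ← inf_assoc, inf_eq_left.mpr hz]
  rw [← key (h.sup_inf_left hu hv), ← key (h.sup_inf_right hu hv), h.inf_sup_inf]

theorem inf_sup_eq_of_le (h : IsDirectDecomposition a b) {u u' v : L} (hu : u ≤ a)
    (hv : v ≤ b) (hu' : u' ≤ u) : u ⊓ (u' ⊔ v) = u' :=
  le_antisymm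
    ((inf_le_inf_right _ hu).trans (by rw [inf_comm, h.sup_inf_left (hu'.trans hu) hv]))
    (le_inf hu' le_sup_left)

end IsDirectDecomposition

theorem IsDirectDecomposition.directlyDecomposable {L : Type u} [Lattice L] [OrderBot L] {a b : L}
    (h : IsDirectDecomposition a b) (ha : a ≠ ⊥) (hb : b ≠ ⊥) : DirectlyDecomposable L :=
  ⟨Set.Iic a, Set.Iic b, inferInstance, inferInstance,
    ⟨⊥, ⟨a, le_rfl⟩, fun h => ha (congrArg Subtype.val h).symm⟩,
    ⟨⊥, ⟨b, le_rfl⟩, fun h => hb (congrArg Subtype.val h).symm⟩, ⟨Equiv.toOrderIso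
      { toFun x := (⟨x ⊓ a, inf_le_right⟩, ⟨x ⊓ b, inf_le_right⟩)
        invFun p := p.1 ⊔ p.2
        left_inv := h.inf_sup_inf
        right_inv p := Prod.ext (Subtype.ext (h.sup_inf_left p.1.2 p.2.2))
          (Subtype.ext (h.sup_inf_right p.1.2 p.2.2)) }
      (fun _ _ hxy => ⟨inf_le_inf_right a hxy, inf_le_inf_right b hxy⟩)
      (fun _ _ hpq => sup_le_sup hpq.1 hpq.2)⟩⟩

namespace OrderIso

variable {L A B : Type*} [Lattice L] [BoundedOrder L] [PartialOrder A] [PartialOrder B]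
  (e : L ≃o A × B)

def fstFactor : L := e.symm ((e ⊤).1, (e ⊥).2)

def sndFactor : L := (e.trans prodComm).fstFactor

theorem snd_apply_of_le_fstFactor {u : L} (hu : u ≤ e.fstFactor) : (e u).2 = (e ⊥).2 :=
  le_antisymm (by simpa [fstFactor] using (e.monotone hu).2) (e.monotone bot_le).2

theorem fst_apply_of_le_sndFactor {v : L} (hv : v ≤ e.sndFactor) : (e v).1 = (e ⊥).1 :=
  (e.trans prodComm).snd_apply_of_le_fstFactor hv

theorem apply_inf_fstFactor (x : L) : e (x ⊓ e.fstFactor) = ((e x).1, (e ⊥).2) := by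
  refine le_antisymm
    (Prod.le_def.2 ⟨(e.monotone inf_le_left).1, (e.snd_apply_of_le_fstFactor inf_le_right).le⟩) ?_
  rw [← e.symm_apply_le]
  refine le_inf (e.symm_apply_le.mpr ⟨le_rfl, (e.monotone bot_le).2⟩) (e.symm.monotone ?_)
  exact ⟨(e.monotone le_top).1, le_rfl⟩

theorem apply_inf_sndFactor (x : L) : e (x ⊓ e.sndFactor) = ((e ⊥).1, (e x).2) :=
  congrArg Prod.swap ((e.trans prodComm).apply_inf_fstFactor x)

theorem apply_sup {u v : L} (hu : u ≤ e.fstFactor) (hv : v ≤ e.sndFactor) :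
    e (u ⊔ v) = ((e u).1, (e v).2) := by
  refine le_antisymm ?_ (Prod.le_def.2 ⟨(e.monotone le_sup_left).1, (e.monotone le_sup_right).2⟩)
  rw [← e.le_symm_apply]
  refine sup_le (e.le_symm_apply.mpr ⟨le_rfl, ?_⟩) (e.le_symm_apply.mpr ⟨?_, le_rfl⟩)
  · rw [e.snd_apply_of_le_fstFactor hu]
    exact (e.monotone bot_le).2
  · rw [e.fst_apply_of_le_sndFactor hv]
    exact (e.monotone bot_le).1

theorem isDirectDecomposition : IsDirectDecomposition e.fstFactor e.sndFactor where
  inf_sup_inf x := e.injective <| by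
    rw [e.apply_sup inf_le_right inf_le_right, apply_inf_fstFactor, apply_inf_sndFactor]
  sup_inf_left u v hu hv := e.injective <| by
    rw [apply_inf_fstFactor, e.apply_sup hu hv, ← e.snd_apply_of_le_fstFactor hu]
  sup_inf_right u v hu hv := e.injective <| by
    rw [apply_inf_sndFactor, e.apply_sup hu hv, ← e.fst_apply_of_le_sndFactor hv]

theorem fstFactor_ne_bot [Nontrivial A] [Nonempty B] : e.fstFactor ≠ ⊥ := by
  intro h
  have htop : (e ⊤).1 = (e ⊥).1 := by
    simpa [fstFactor] using congrArg (fun x => (e x).1) h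
  have hall : ∀ α : A, α = (e ⊥).1 := fun α => by
    obtain ⟨x, hx⟩ := e.surjective (α, Classical.arbitrary B)
    have hle := (e.monotone (le_top : x ≤ ⊤)).1
    have hge := (e.monotone (bot_le : ⊥ ≤ x)).1
    rw [hx, htop] at hle
    rw [hx] at hge
    exact le_antisymm hle hge
  obtain ⟨α, α', hne⟩ := exists_pair_ne A
  exact hne ((hall α).trans (hall α').symm)

theorem sndFactor_ne_bot [Nonempty A] [Nontrivial B] : e.sndFactor ≠ ⊥ :=
  (e.trans prodComm).fstFactor_ne_bot

end OrderIso

theorem directlyDecomposable_iff_exists_isDirectDecomposition {L : Type u} [Lattice L]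
    [BoundedOrder L] :
    DirectlyDecomposable L ↔ ∃ a b : L, IsDirectDecomposition a b ∧ a ≠ ⊥ ∧ b ≠ ⊥ := by
  constructor
  · rintro ⟨A, B, _, _, _, _, ⟨e⟩⟩
    exact ⟨_, _, e.isDirectDecomposition, e.fstFactor_ne_bot, e.sndFactor_ne_bot⟩
  · rintro ⟨a, b, h, ha, hb⟩
    exact h.directlyDecomposable ha hb

section Group

variable {G : Type*} [Group G]

theorem Commute.exists_mul_pow_eq_left {a b : G} (hab : Commute a b)
    (hco : (orderOf a).Coprime (orderOf b)) : ∃ k : ℕ, (a * b) ^ k = a := by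
  obtain ⟨t, ht⟩ := exists_pow_eq_self_of_coprime hco.symm
  exact ⟨orderOf b * t, by rw [pow_mul, hab.mul_pow, pow_orderOf_eq_one, mul_one, ht]⟩

theorem mem_zpowers_zpow_of_not_dvd {p k : ℕ} (hp : p.Prime) {q : G} (hq : q ^ p ^ k = 1)
    {j : ℤ} (hj : ¬ (p : ℤ) ∣ j) : q ∈ Subgroup.zpowers (q ^ j) := by
  obtain ⟨u, v, huv⟩ : IsCoprime ((p : ℤ) ^ k) j :=
    IsCoprime.pow_left ((Nat.prime_iff_prime_int.mp hp).coprime_iff_not_dvd.mpr hj)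
  have hq' : q ^ ((p : ℤ) ^ k) = 1 := by exact_mod_cast hq
  refine Subgroup.mem_zpowers_iff.mpr ⟨v, ?_⟩
  calc (q ^ j) ^ v = (q ^ ((p : ℤ) ^ k)) ^ u * (q ^ j) ^ v := by rw [hq', one_zpow, one_mul]
    _ = q := by rw [← zpow_mul, ← zpow_mul, ← zpow_add, mul_comm _ u, mul_comm j, huv, zpow_one]

theorem notMem_zpowers_pow_self {p k : ℕ} (hp : p.Prime) {q : G} (hq : q ^ p ^ k = 1)
    (hq1 : q ≠ 1) : q ∉ Subgroup.zpowers (q ^ p) := by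
  intro h
  obtain ⟨j, hj⟩ := Subgroup.mem_zpowers_iff.mp h
  have hpq : p ∣ orderOf q := by
    obtain ⟨i, -, hi⟩ := (Nat.dvd_prime_pow hp).mp (orderOf_dvd_of_pow_eq_one hq)
    rcases i with _ | i
    · exact absurd (orderOf_eq_one_iff.mp (by simpa using hi)) hq1
    · exact hi ▸ dvd_pow_self p i.succ_ne_zero
  have hord : (orderOf q : ℤ) ∣ p * j - 1 := by
    rw [orderOf_dvd_iff_zpow_eq_one, zpow_sub_one, zpow_mul, zpow_natCast, hj, mul_inv_cancel]
  have hp1 : (p : ℤ) ∣ 1 := by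
    simpa using dvd_sub (dvd_mul_right (p : ℤ) j) ((Int.natCast_dvd_natCast.mpr hpq).trans hord)
  exact hp.not_dvd_one (Int.natCast_dvd_natCast.mp hp1)

theorem Subgroup.mem_sup_iff_mk_mem_map (X N : Subgroup G) [N.Normal] {g : G} :
    g ∈ X ⊔ N ↔ (g : G ⧸ N) ∈ X.map (QuotientGroup.mk' N) := by
  rw [← QuotientGroup.mk'_apply, ← Subgroup.mem_comap, Subgroup.comap_map_eq,
    QuotientGroup.ker_mk']

theorem QuotientGroup.mk_mem_zpowers_mk_of_le {N M : Subgroup G} [N.Normal] [M.Normal]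
    (hNM : N ≤ M) {g z : G} (h : (z : G ⧸ N) ∈ Subgroup.zpowers (g : G ⧸ N)) :
    (z : G ⧸ M) ∈ Subgroup.zpowers (g : G ⧸ M) := by
  obtain ⟨i, hi⟩ := Subgroup.mem_zpowers_iff.mp h
  rw [← QuotientGroup.mk_zpow, QuotientGroup.eq] at hi
  exact Subgroup.mem_zpowers_iff.mpr
    ⟨i, by rw [← QuotientGroup.mk_zpow, QuotientGroup.eq]; exact hNM hi⟩

theorem Subgroup.index_subgroupOf_eq_natCard_map (A N : Subgroup G) [N.Normal] :
    (N.subgroupOf A).index = Nat.card (A.map (QuotientGroup.mk' N)) := by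
  have hker : ((QuotientGroup.mk' N).comp A.subtype).ker = N.subgroupOf A := by
    rw [← MonoidHom.comap_ker, QuotientGroup.ker_mk']
    rfl
  rw [← hker, Subgroup.index_ker, MonoidHom.range_comp, Subgroup.range_subtype]

end Group

/-- The subtype of the statement: Mathlib's bundled `ClosedSubgroup` carries no joins. -/
abbrev ClosedSubgroups (G : Type*) [Group G] [TopologicalSpace G] : Type _ :=
  {X : Subgroup G // IsClosed (X : Set G)}

instance (G : Type*) [Group G] [TopologicalSpace G] [IsTopologicalGroup G] :
    CompleteLattice (ClosedSubgroups G) :=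
  GaloisInsertion.liftCompleteLattice
    { choice X hX := ⟨X, isClosed_of_closure_subset fun _ hx => hX hx⟩
      gc X Y := ⟨X.le_topologicalClosure.trans, fun h => X.topologicalClosure_minimal h Y.2⟩
      le_l_u Y := Y.1.le_topologicalClosure
      choice_eq X hX := Subtype.ext (le_antisymm X.le_topologicalClosure hX)
      : GaloisInsertion (fun X : Subgroup G =>
          (⟨X.topologicalClosure, X.isClosed_topologicalClosure⟩ : ClosedSubgroups G)) Subtype.val }

namespace ClosedSubgroups

variable {G : Type*} [Group G] [TopologicalSpace G] [IsTopologicalGroup G]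

theorem coe_eq_bot_iff [T1Space G] {X : ClosedSubgroups G} : X.1 = ⊥ ↔ X = ⊥ := by
  have hbot : (⊥ : ClosedSubgroups G).1 = ⊥ :=
    le_antisymm (bot_le (a := (⟨⊥, by simp⟩ : ClosedSubgroups G))) bot_le
  rw [← hbot, Subtype.val_inj]

def zpowers (g : G) : ClosedSubgroups G :=
  ⟨(Subgroup.zpowers g).topologicalClosure, Subgroup.isClosed_topologicalClosure _⟩

theorem mem_zpowers (g : G) : g ∈ (zpowers g).1 :=
  Subgroup.le_topologicalClosure _ (Subgroup.mem_zpowers g)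

theorem zpowers_le {g : G} {X : ClosedSubgroups G} : zpowers g ≤ X ↔ g ∈ X.1 :=
  ⟨fun h => h (mem_zpowers g), fun h =>
    Subgroup.topologicalClosure_minimal _ (Subgroup.zpowers_le.mpr h) X.2⟩

variable [T2Space G]

theorem commute_of_mem_zpowers {g x y : G} (hx : x ∈ (zpowers g).1) (hy : y ∈ (zpowers g).1) :
    Commute x y :=
  letI := (Subgroup.zpowers g).commGroupTopologicalClosure
    (Subgroup.zpowers_isMulCommutative g).is_comm.comm
  congrArg Subtype.val (mul_comm (⟨x, hx⟩ : (Subgroup.zpowers g).topologicalClosure) ⟨y, hy⟩)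

variable [CompactSpace G]

theorem coe_sup_of_commute {X Y : ClosedSubgroups G} (h : ∀ x ∈ X.1, ∀ y ∈ Y.1, Commute x y) :
    ((X ⊔ Y).1 : Set G) = X.1 * Y.1 := by
  have hXY : X.1 ≤ Subgroup.normalizer (Y.1 : Set G) := fun x hx =>
    Subgroup.centralizer_le_normalizer _
      (Subgroup.mem_centralizer_iff.mpr fun y hy => (h x hx y hy).eq.symm)
  rw [show (X ⊔ Y).1 = (X.1 ⊔ Y.1).topologicalClosure from rfl, Subgroup.topologicalClosure_coe,
    Subgroup.coe_mul_of_left_le_normalizer_right X.1 Y.1 hXY]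
  exact (X.2.isCompact.mul Y.2.isCompact).isClosed.closure_eq

theorem exists_eq_zpow_mul_of_mem_zpowers_mul {x y z : G} (hxy : Commute x y) {p : ℕ}
    (hp : 0 < p) (hz : z ∈ (zpowers (x * y)).1) :
    ∃ k : ℤ, ∃ s ∈ (zpowers (x ^ p)).1, ∃ r ∈ (zpowers (y ^ p)).1,
      z = x ^ k * s * (y ^ k * r) := by
  let S : Set G := ⋃ k ∈ Finset.Ico (0 : ℤ) p, (fun sr : G × G => x ^ k * sr.1 * (y ^ k * sr.2)) ''
    ((zpowers (x ^ p)).1 ×ˢ (zpowers (y ^ p)).1)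
  have hS : IsClosed S := Set.Finite.isClosed_biUnion (Finset.finite_toSet _) fun k _ =>
    (((zpowers _).2.isCompact.prod (zpowers _).2.isCompact).image (by fun_prop)).isClosed
  have hzS : z ∈ S := by
    refine closure_minimal ?_ hS (by rwa [← Subgroup.topologicalClosure_coe])
    rintro _ ⟨j, rfl⟩
    have hpj : j % p + p * (j / p) = j := Int.emod_add_mul_ediv j p
    refine Set.mem_biUnion (x := j % p)
      (Finset.mem_Ico.mpr ⟨Int.emod_nonneg j (by omega), Int.emod_lt_of_pos j (by omega)⟩)
      ⟨((x ^ p) ^ (j / p), (y ^ p) ^ (j / p)),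
        ⟨zpow_mem (mem_zpowers _) _, zpow_mem (mem_zpowers _) _⟩, ?_⟩
    simp only [← zpow_natCast, ← zpow_mul, ← zpow_add, hpj, hxy.mul_zpow]
  simp only [S, Set.mem_iUnion, Set.mem_image] at hzS
  obtain ⟨k, -, ⟨s, r⟩, ⟨hs, hr⟩, rfl⟩ := hzS
  exact ⟨k, s, hs, r, hr, rfl⟩

end ClosedSubgroups

section FiniteQuotients

variable {G : Type*} [Group G] [TopologicalSpace G]

theorem Subgroup.map_mk'_topologicalClosure [IsTopologicalGroup G] (X : Subgroup G)
    (N : OpenNormalSubgroup G) :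
    X.topologicalClosure.map (QuotientGroup.mk' (N : Subgroup G)) =
      X.map (QuotientGroup.mk' (N : Subgroup G)) := by
  refine le_antisymm (Subgroup.map_le_iff_le_comap.mpr ?_)
    (Subgroup.map_mono X.le_topologicalClosure)
  rw [Subgroup.comap_map_eq, QuotientGroup.ker_mk']
  exact X.topologicalClosure_minimal le_sup_left <| Subgroup.isClosed_of_isOpen _ <|
    Subgroup.isOpen_mono le_sup_right N.isOpen

theorem mem_piStar_of_dvd_orderOf {A : Subgroup G} {p : ℕ} (hp : p.Prime)
    (N : OpenNormalSubgroup G) {g : G} (hg : g ∈ A)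
    (h : p ∣ orderOf (g : G ⧸ (N : Subgroup G))) : p ∈ piStar A := by
  refine ⟨hp, (N : Subgroup G).subgroupOf A, inferInstance,
    N.isOpen.preimage continuous_subtype_val, ?_⟩
  rw [Subgroup.index_subgroupOf_eq_natCard_map]
  exact h.trans (Subgroup.orderOf_dvd_natCard _ (Subgroup.mem_map_of_mem _ hg))

theorem coprime_orderOf_mk {H K : Subgroup G} (hHK : piStar H ∩ piStar K = ∅)
    (N : OpenNormalSubgroup G) {h k : G} (hh : h ∈ H) (hk : k ∈ K) :
    (orderOf (h : G ⧸ (N : Subgroup G))).Coprime (orderOf (k : G ⧸ (N : Subgroup G))) :=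
  Nat.coprime_of_dvd fun p hp hph hpk => Set.eq_empty_iff_forall_notMem.mp hHK p
    ⟨mem_piStar_of_dvd_orderOf hp N hh hph, mem_piStar_of_dvd_orderOf hp N hk hpk⟩

variable [IsTopologicalGroup G] [CompactSpace G] [TotallyDisconnectedSpace G]

theorem Subgroup.mem_iff_forall_mk_mem_map {X : Subgroup G} (hX : IsClosed (X : Set G))
    {g : G} : g ∈ X ↔ ∀ N : OpenNormalSubgroup G,
      (g : G ⧸ (N : Subgroup G)) ∈ X.map (QuotientGroup.mk' (N : Subgroup G)) := by
  refine ⟨fun hg N => Subgroup.mem_map_of_mem _ hg, fun h => ?_⟩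
  have hXinf : X = sInf {U : Subgroup G | IsOpen (U : Set G) ∧ X ≤ U} :=
    ProfiniteGrp.closedSubgroup_eq_sInf_open ⟨X, hX⟩
  rw [hXinf, Subgroup.mem_sInf]
  rintro U ⟨hU, hXU⟩
  obtain ⟨N, hNU⟩ := ProfiniteGrp.exist_openNormalSubgroup_sub_open_nhds_of_one hU U.one_mem
  exact sup_le hXU (fun _ hx => hNU hx) ((Subgroup.mem_sup_iff_mk_mem_map X N).mpr (h N))

theorem eq_one_iff_forall_mk_eq_one {g : G} :
    g = 1 ↔ ∀ N : OpenNormalSubgroup G, (g : G ⧸ (N : Subgroup G)) = 1 := by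
  simpa [Subgroup.map_bot] using Subgroup.mem_iff_forall_mk_mem_map (X := ⊥) (by simp) (g := g)

theorem mem_topologicalClosure_zpowers_iff {g z : G} :
    z ∈ (Subgroup.zpowers g).topologicalClosure ↔ ∀ N : OpenNormalSubgroup G,
      (z : G ⧸ (N : Subgroup G)) ∈ Subgroup.zpowers (g : G ⧸ (N : Subgroup G)) := by
  simp only [Subgroup.mem_iff_forall_mk_mem_map (Subgroup.isClosed_topologicalClosure _),
    Subgroup.map_mk'_topologicalClosure, MonoidHom.map_zpowers, QuotientGroup.mk'_apply]

theorem exists_orderOf_mk_eq_of_mem_piStar {A : Subgroup G} {p : ℕ} (hp : p ∈ piStar A) :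
    ∃ g ∈ A, ∃ N : OpenNormalSubgroup G, orderOf (g : G ⧸ (N : Subgroup G)) = p := by
  obtain ⟨hp, N', -, hN', hpN'⟩ := hp
  obtain ⟨V, hV, hVN'⟩ := isOpen_induced_iff.mp hN'
  have h1V : (1 : A) ∈ Subtype.val ⁻¹' V := hVN' ▸ N'.one_mem
  obtain ⟨N, hNV⟩ := ProfiniteGrp.exist_openNormalSubgroup_sub_open_nhds_of_one hV h1V
  have hle : (N : Subgroup G).subgroupOf A ≤ N' := fun x hx => by
    rw [← SetLike.mem_coe, ← hVN']
    exact hNV hx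
  have : Finite (G ⧸ (N : Subgroup G)) := Subgroup.quotient_finite_of_isOpen _ N.isOpen
  have : Fact p.Prime := ⟨hp⟩
  obtain ⟨⟨q, hq⟩, hqp⟩ := exists_prime_orderOf_dvd_card'
    (G := A.map (QuotientGroup.mk' (N : Subgroup G))) p
    (by rw [← Subgroup.index_subgroupOf_eq_natCard_map]
        exact hpN'.trans (Subgroup.index_dvd_of_le hle))
  obtain ⟨g, hg, rfl⟩ := Subgroup.mem_map.mp hq
  exact ⟨g, hg, N, by rwa [Subgroup.orderOf_mk] at hqp⟩

theorem mem_of_mul_mem_of_commute {H K X : Subgroup G} (hX : IsClosed (X : Set G))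
    (hpi : piStar H ∩ piStar K = ∅) {g₁ g₂ : G} (h₁ : g₁ ∈ H) (h₂ : g₂ ∈ K)
    (hc : Commute g₁ g₂) (h : g₁ * g₂ ∈ X) : g₁ ∈ X :=
  (Subgroup.mem_iff_forall_mk_mem_map hX).mpr fun N => by
    obtain ⟨k, hk⟩ := (hc.map (QuotientGroup.mk' (N : Subgroup G))).exists_mul_pow_eq_left
      (coprime_orderOf_mk hpi N h₁ h₂)
    exact ⟨(g₁ * g₂) ^ k, pow_mem h k, by simpa using hk⟩

end FiniteQuotients

def IsProPElement {G : Type*} [Group G] [TopologicalSpace G] (p : ℕ) (x : G) : Prop :=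
  ∀ N : OpenNormalSubgroup G, ∃ k : ℕ, (x : G ⧸ (N : Subgroup G)) ^ p ^ k = 1

section ProP

open ClosedSubgroups

variable {G : Type*} [Group G] [TopologicalSpace G] [IsTopologicalGroup G] [CompactSpace G]
  {p : ℕ}

/-- The intersection of the `⟨g ^ m⟩‾` with `p ∤ m` is the `p`-Sylow subgroup of `⟨g⟩‾`; by
compactness it is not contained in `N₀`. -/
theorem exists_notMem_forall_mem_zpowers_pow {g : G} {N₀ : OpenNormalSubgroup G}
    (hp : p.Prime) (hg : orderOf (g : G ⧸ (N₀ : Subgroup G)) = p) :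
    ∃ x, x ∉ (N₀ : Subgroup G) ∧ ∀ m : ℕ, ¬ p ∣ m → x ∈ (zpowers (g ^ m)).1 := by
  let t : {m : ℕ // ¬ p ∣ m} → Set G := fun m => (zpowers (g ^ m.1)).1 ∩ (N₀ : Set G)ᶜ
  have : Nonempty {m : ℕ // ¬ p ∣ m} := ⟨⟨1, hp.not_dvd_one⟩⟩
  have ht : ∀ m, IsClosed (t m) := fun m => (zpowers _).2.inter N₀.isOpen.isClosed_compl
  have hsub : ∀ a b : ℕ, zpowers (g ^ (a * b)) ≤ zpowers (g ^ a) ⊓ zpowers (g ^ b) := fun a b =>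
    le_inf (zpowers_le.mpr (by rw [pow_mul]; exact pow_mem (mem_zpowers _) b))
      (zpowers_le.mpr (by rw [pow_mul']; exact pow_mem (mem_zpowers _) a))
  have hdir : Directed (· ⊇ ·) t := fun m m' =>
    ⟨⟨m.1 * m'.1, fun h => (hp.dvd_mul.mp h).elim m.2 m'.2⟩,
      Set.inter_subset_inter_left _ ((hsub m m').trans inf_le_left),
      Set.inter_subset_inter_left _ ((hsub m m').trans inf_le_right)⟩
  have hne : ∀ m, (t m).Nonempty := fun m => ⟨g ^ m.1, mem_zpowers _, fun h => m.2 <| hg ▸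
    orderOf_dvd_of_pow_eq_one (by rwa [← QuotientGroup.mk_pow, QuotientGroup.eq_one_iff])⟩
  obtain ⟨x, hx⟩ := IsCompact.nonempty_iInter_of_directed_nonempty_isCompact_isClosed t hdir hne
    (fun m => (ht m).isCompact) ht
  rw [Set.mem_iInter] at hx
  exact ⟨x, (hx ⟨1, hp.not_dvd_one⟩).2, fun m hm => (hx ⟨m, hm⟩).1⟩

variable [TotallyDisconnectedSpace G]

theorem isProPElement_of_forall_mem_zpowers_pow {g x : G} (hp : p.Prime)
    (h : ∀ m : ℕ, ¬ p ∣ m → x ∈ (zpowers (g ^ m)).1) : IsProPElement p x := fun N => by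
  have : Finite (G ⧸ (N : Subgroup G)) := Subgroup.quotient_finite_of_isOpen _ N.isOpen
  set n := orderOf (g : G ⧸ (N : Subgroup G))
  have hn : n ≠ 0 := (orderOf_pos _).ne'
  -- `n = p ^ a * m` with `p ∤ m`, and `x ≡ (g ^ m) ^ j`, so `x ^ p ^ a ≡ (g ^ n) ^ j = 1`
  refine ⟨n.factorization p, ?_⟩
  obtain ⟨j, hj⟩ := Subgroup.mem_zpowers_iff.mp
    (mem_topologicalClosure_zpowers_iff.mp (h _ (Nat.not_dvd_ordCompl hp hn)) N)
  rw [← hj, QuotientGroup.mk_pow, ← zpow_natCast, ← zpow_natCast, ← zpow_mul, ← zpow_mul,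
    mul_left_comm, ← Nat.cast_mul, Nat.div_mul_cancel (Nat.ordProj_dvd n p), mul_comm, zpow_mul,
    zpow_natCast, pow_orderOf_eq_one, one_zpow]

theorem exists_isProPElement {A : Subgroup G} (hA : IsClosed (A : Set G)) (hp : p ∈ piStar A) :
    ∃ x ∈ A, x ≠ 1 ∧ IsProPElement p x := by
  obtain ⟨g, hgA, N₀, hg⟩ := exists_orderOf_mk_eq_of_mem_piStar hp
  obtain ⟨x, hxN₀, hx⟩ := exists_notMem_forall_mem_zpowers_pow hp.1 hg
  have hxg : x ∈ (zpowers g).1 := by simpa using hx 1 hp.1.not_dvd_one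
  exact ⟨x, (zpowers_le (X := ⟨A, hA⟩)).mpr hgA hxg, fun h => hxN₀ (h ▸ one_mem _),
    isProPElement_of_forall_mem_zpowers_pow hp.1 hx⟩

namespace IsProPElement

variable {x : G} (hx : IsProPElement p x) (hp : p.Prime)
include hx hp

theorem mem_zpowers_zpow {j : ℤ} (hj : ¬ (p : ℤ) ∣ j) : x ∈ (zpowers (x ^ j)).1 :=
  mem_topologicalClosure_zpowers_iff.mpr fun N => by
    obtain ⟨k, hk⟩ := hx N
    simpa [QuotientGroup.mk_zpow] using mem_zpowers_zpow_of_not_dvd hp hk hj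

theorem notMem_zpowers_pow (hx1 : x ≠ 1) : x ∉ (zpowers (x ^ p)).1 := by
  intro h
  obtain ⟨N, hN⟩ : ∃ N : OpenNormalSubgroup G, (x : G ⧸ (N : Subgroup G)) ≠ 1 := by
    by_contra! h'
    exact hx1 (eq_one_iff_forall_mk_eq_one.mpr h')
  obtain ⟨k, hk⟩ := hx N
  exact notMem_zpowers_pow_self hp hk hN
    (by simpa [QuotientGroup.mk_pow] using mem_topologicalClosure_zpowers_iff.mp h N)

theorem zpow_notMem_zpowers_pow (hx1 : x ≠ 1) {j : ℤ} (hj : ¬ (p : ℤ) ∣ j) :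
    x ^ j ∉ (zpowers (x ^ p)).1 := fun h =>
  hx.notMem_zpowers_pow hp hx1 (zpowers_le.mpr h (hx.mem_zpowers_zpow hp hj))

theorem mem_zpowers_of_notMem_zpowers_pow {z : G} (hz : z ∈ (zpowers x).1)
    (hzp : z ∉ (zpowers (x ^ p)).1) : x ∈ (zpowers z).1 := by
  rw [zpowers, mem_topologicalClosure_zpowers_iff] at hz hzp ⊢
  obtain ⟨N₁, hN₁⟩ := not_forall.mp hzp
  intro N
  have hle₁ : ((N ⊓ N₁ : OpenNormalSubgroup G) : Subgroup G) ≤ N₁ := inf_le_right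
  obtain ⟨j, hj⟩ := Subgroup.mem_zpowers_iff.mp (hz (N ⊓ N₁))
  have hpj : ¬ (p : ℤ) ∣ j := by
    rintro ⟨i, rfl⟩
    refine hN₁ (QuotientGroup.mk_mem_zpowers_mk_of_le hle₁
      (Subgroup.mem_zpowers_iff.mpr ⟨i, ?_⟩))
    rw [← hj, QuotientGroup.mk_pow, ← zpow_natCast, ← zpow_mul]
  obtain ⟨k, hk⟩ := hx (N ⊓ N₁)
  have hx' := mem_zpowers_zpow_of_not_dvd hp hk hpj
  rw [hj] at hx'
  exact QuotientGroup.mk_mem_zpowers_mk_of_le (inf_le_left : N ⊓ N₁ ≤ N) hx'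

theorem eq_or_le_zpowers_pow {W : ClosedSubgroups G} (hW : W ≤ zpowers x) :
    W = zpowers x ∨ W ≤ zpowers (x ^ p) := by
  refine or_iff_not_imp_right.mpr fun hW' => le_antisymm hW (zpowers_le.mpr ?_)
  have hW'' : ¬ W.1 ≤ (zpowers (x ^ p)).1 := hW'
  obtain ⟨z, hzW, hzp⟩ := SetLike.not_le_iff_exists.mp hW''
  exact zpowers_le.mpr hzW (hx.mem_zpowers_of_notMem_zpowers_pow hp (hW hzW) hzp)

end IsProPElement

end ProP

namespace IsDirectDecomposition

open ClosedSubgroups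

section

variable {G : Type*} [Group G] [TopologicalSpace G] [IsTopologicalGroup G]
  {a b : ClosedSubgroups G} (h : IsDirectDecomposition a b)
include h

theorem notMem_sup_of_notMem {u u' v : ClosedSubgroups G} (hu : u ≤ a) (hv : v ≤ b)
    (hu' : u' ≤ u) {g : G} (hg : g ∈ u.1) (hg' : g ∉ u'.1) : g ∉ (u' ⊔ v).1 := fun hgv =>
  hg' (by rw [← h.inf_sup_eq_of_le hu hv hu']; exact ⟨hg, hgv⟩)

theorem coe_inf_coe_eq_bot [T1Space G] : a.1 ⊓ b.1 = ⊥ :=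
  coe_eq_bot_iff.mpr h.inf_eq_bot

variable [CompactSpace G] [T2Space G]

theorem exists_mul_eq (g : G) : ∃ u ∈ a.1, ∃ v ∈ b.1, Commute u v ∧ u * v = g := by
  have hcomm : ∀ x ∈ (zpowers g ⊓ a).1, ∀ y ∈ (zpowers g ⊓ b).1, Commute x y :=
    fun x hx y hy => commute_of_mem_zpowers hx.1 hy.1
  have hg : g ∈ ((zpowers g ⊓ a ⊔ zpowers g ⊓ b).1 : Set G) := by
    rw [h.inf_sup_inf]
    exact mem_zpowers g
  rw [coe_sup_of_commute hcomm] at hg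
  obtain ⟨u, hu, v, hv, huv⟩ := hg
  exact ⟨u, hu.2, v, hv.2, hcomm u hu v hv, huv⟩

theorem coe_mul_coe_eq_univ : (a.1 : Set G) * (b.1 : Set G) = Set.univ :=
  Set.eq_univ_of_forall fun g => by
    obtain ⟨u, hu, v, hv, -, huv⟩ := h.exists_mul_eq g
    exact ⟨u, hu, v, hv, huv⟩

end

variable {G : Type*} [Group G] [TopologicalSpace G] [IsTopologicalGroup G] [CompactSpace G]
  [TotallyDisconnectedSpace G] {a b : ClosedSubgroups G} (h : IsDirectDecomposition a b)
include h

theorem zpowers_mul_eq_sup {p : ℕ} (hp : p.Prime) {x y : G} (hxa : x ∈ a.1) (hyb : y ∈ b.1)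
    (hx : IsProPElement p x) (hy : IsProPElement p y) (hx1 : x ≠ 1) (hy1 : y ≠ 1) :
    zpowers (x * y) = zpowers x ⊔ zpowers y := by
  have hPa : zpowers x ≤ a := zpowers_le.mpr hxa
  have hQb : zpowers y ≤ b := zpowers_le.mpr hyb
  have hxR : x ∈ (zpowers x ⊔ zpowers y).1 := (le_sup_left : zpowers x ≤ _) (mem_zpowers x)
  have hyR : y ∈ (zpowers x ⊔ zpowers y).1 := (le_sup_right : zpowers y ≤ _) (mem_zpowers y)
  have hW := h.inf_sup_inf_of_le_sup hPa hQb (zpowers_le.mpr (mul_mem hxR hyR))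
  have hxy := mem_zpowers (x * y)
  rcases hx.eq_or_le_zpowers_pow hp (inf_le_right : zpowers (x * y) ⊓ zpowers x ≤ _)
    with hWP | hWP
  · rcases hy.eq_or_le_zpowers_pow hp (inf_le_right : zpowers (x * y) ⊓ zpowers y ≤ _)
      with hWQ | hWQ
    · rw [← hW, hWP, hWQ]
    · have hle : zpowers (x * y) ≤ zpowers (y ^ p) ⊔ zpowers x := by
        rw [← hW, sup_comm]
        exact sup_le_sup hWQ inf_le_right
      refine absurd ?_ (h.symm.notMem_sup_of_notMem hQb hPa (zpowers_le.mpr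
        (pow_mem (mem_zpowers y) p)) (mem_zpowers y) (hy.notMem_zpowers_pow hp hy1))
      simpa using mul_mem (inv_mem ((le_sup_right : zpowers x ≤ _) (mem_zpowers x))) (hle hxy)
  · have hle : zpowers (x * y) ≤ zpowers (x ^ p) ⊔ zpowers y := by
      rw [← hW]
      exact sup_le_sup hWP inf_le_right
    refine absurd ?_ (h.notMem_sup_of_notMem hPa hQb (zpowers_le.mpr
      (pow_mem (mem_zpowers x) p)) (mem_zpowers x) (hx.notMem_zpowers_pow hp hx1))
    simpa using mul_mem (hle hxy) (inv_mem ((le_sup_right : zpowers y ≤ _) (mem_zpowers y)))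

theorem piStar_inter_eq_empty : piStar a.1 ∩ piStar b.1 = ∅ := by
  refine Set.eq_empty_iff_forall_notMem.mpr fun p ⟨hpa, hpb⟩ => ?_
  obtain ⟨x, hxa, hx1, hx⟩ := exists_isProPElement a.2 hpa
  obtain ⟨y, hyb, hy1, hy⟩ := exists_isProPElement b.2 hpb
  have hR := h.zpowers_mul_eq_sup hpa.1 hxa hyb hx hy hx1 hy1
  have hxR : x ∈ (zpowers (x * y)).1 := hR ▸ (le_sup_left : zpowers x ≤ _) (mem_zpowers x)
  have hyR : y ∈ (zpowers (x * y)).1 := hR ▸ (le_sup_right : zpowers y ≤ _) (mem_zpowers y)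
  obtain ⟨k, s, hs, r, hr, hxk⟩ :=
    exists_eq_zpow_mul_of_mem_zpowers_mul (commute_of_mem_zpowers hxR hyR) hpa.1.pos hxR
  have hPa : zpowers (x ^ p) ≤ a := zpowers_le.mpr (pow_mem hxa p)
  have hQb : zpowers (y ^ p) ≤ b := zpowers_le.mpr (pow_mem hyb p)
  have hykr : y ^ k * r ∈ a.1 ⊓ b.1 := by
    refine Subgroup.mem_inf.mpr ⟨?_, mul_mem (zpow_mem hyb k) (hQb hr)⟩
    rw [eq_inv_mul_of_mul_eq hxk.symm]
    exact mul_mem (inv_mem (mul_mem (zpow_mem hxa k) (hPa hs))) hxa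
  rw [h.coe_inf_coe_eq_bot, Subgroup.mem_bot] at hykr
  by_cases hpk : (p : ℤ) ∣ k
  · obtain ⟨i, rfl⟩ := hpk
    have hxpi : x ^ ((p : ℤ) * i) * s ∈ (zpowers (x ^ p)).1 :=
      mul_mem (by rw [zpow_mul, zpow_natCast]; exact zpow_mem (mem_zpowers _) i) hs
    rw [hykr, mul_one] at hxk
    rw [← hxk] at hxpi
    exact hx.notMem_zpowers_pow hpa.1 hx1 hxpi
  · refine hy.zpow_notMem_zpowers_pow hpa.1 hy1 hpk ?_
    rw [eq_inv_of_mul_eq_one_left hykr]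
    exact inv_mem hr

theorem normal (hpi : piStar a.1 ∩ piStar b.1 = ∅) : a.1.Normal where
  conj_mem w hw g := by
    obtain ⟨u, hu, v, hv, huv, hz⟩ := h.exists_mul_eq (g * w * g⁻¹)
    suffices v = 1 by rwa [← hz, this, mul_one]
    refine eq_one_iff_forall_mk_eq_one.mpr fun N => orderOf_eq_one_iff.mp ?_
    obtain ⟨k, hk⟩ := (huv.symm.map (QuotientGroup.mk' (N : Subgroup G))).exists_mul_pow_eq_left
      (coprime_orderOf_mk hpi N hu hv).symm
    refine Nat.Coprime.eq_one_of_dvd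
      (coprime_orderOf_mk (by rwa [Set.inter_comm]) N hv hw) ?_
    have hconj : orderOf ((g * w * g⁻¹ : G) : G ⧸ (N : Subgroup G)) =
        orderOf (w : G ⧸ (N : Subgroup G)) := by
      rw [QuotientGroup.mk_mul, QuotientGroup.mk_mul, QuotientGroup.mk_inv, ← MulAut.conj_apply]
      exact MulEquiv.orderOf_eq _ _
    have hk' : ((g * w * g⁻¹ : G) : G ⧸ (N : Subgroup G)) ^ k = v := by
      rw [← hz, huv.eq]
      simpa using hk
    rw [← hconj, ← hk']
    exact orderOf_pow_dvd k

end IsDirectDecomposition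

section Converse

open ClosedSubgroups

variable {G : Type*} [Group G] [TopologicalSpace G] [IsTopologicalGroup G] [CompactSpace G]

theorem sup_inf_eq_of_normal [T2Space G] {G₁ G₂ : ClosedSubgroups G} (h₁ : G₁.1.Normal)
    (h₂ : G₂.1.Normal) (hinf : G₁.1 ⊓ G₂.1 = ⊥) {u v : ClosedSubgroups G} (hu : u ≤ G₁)
    (hv : v ≤ G₂) : (u ⊔ v) ⊓ G₁ = u := by
  refine le_antisymm (fun z hz => ?_) (le_inf le_sup_left hu)
  obtain ⟨hz, hz₁⟩ : z ∈ ((u ⊔ v).1 : Set G) ∧ z ∈ G₁.1 := Subgroup.mem_inf.mp hz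
  have hc : ∀ x ∈ u.1, ∀ y ∈ v.1, Commute x y := fun x hx y hy =>
    Subgroup.commute_of_normal_of_disjoint _ _ h₁ h₂ (disjoint_iff.mpr hinf) x y (hu hx) (hv hy)
  rw [coe_sup_of_commute hc] at hz
  obtain ⟨s, hs, t, ht, rfl⟩ := hz
  have ht1 : t ∈ G₁.1 ⊓ G₂.1 := ⟨by simpa using mul_mem (inv_mem (hu hs)) hz₁, hv ht⟩
  rw [hinf, Subgroup.mem_bot] at ht1
  simpa [ht1] using hs

theorem isDirectDecomposition_of_normal [TotallyDisconnectedSpace G]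
    {G₁ G₂ : ClosedSubgroups G} (h₁ : G₁.1.Normal) (h₂ : G₂.1.Normal) (hinf : G₁.1 ⊓ G₂.1 = ⊥)
    (hmul : (G₁.1 : Set G) * (G₂.1 : Set G) = Set.univ) (hpi : piStar G₁.1 ∩ piStar G₂.1 = ∅) :
    IsDirectDecomposition G₁ G₂ where
  inf_sup_inf X := le_antisymm (sup_le inf_le_left inf_le_left) fun z hz => by
    obtain ⟨g₁, hg₁, g₂, hg₂, rfl⟩ : z ∈ (G₁.1 : Set G) * (G₂.1 : Set G) := hmul ▸ Set.mem_univ z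
    have hc :=
      Subgroup.commute_of_normal_of_disjoint _ _ h₁ h₂ (disjoint_iff.mpr hinf) _ _ hg₁ hg₂
    have hX₁ := mem_of_mul_mem_of_commute X.2 hpi hg₁ hg₂ hc hz
    have hX₂ := mem_of_mul_mem_of_commute X.2 (by rwa [Set.inter_comm]) hg₂ hg₁ hc.symm
      (hc.eq ▸ hz)
    exact mul_mem ((le_sup_left : X ⊓ G₁ ≤ _) ⟨hX₁, hg₁⟩) ((le_sup_right : X ⊓ G₂ ≤ _) ⟨hX₂, hg₂⟩)
  sup_inf_left _ _ hu hv := sup_inf_eq_of_normal h₁ h₂ hinf hu hv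
  sup_inf_right _ _ hu hv := by
    rw [sup_comm]
    exact sup_inf_eq_of_normal h₂ h₁ (by rwa [inf_comm]) hv hu

end Converse

theorem closed_subgroup_poset_directlyDecomposable_iff_general
    {G : Type u} [Group G] [TopologicalSpace G] [IsTopologicalGroup G]
    [CompactSpace G] [TotallyDisconnectedSpace G] :
    DirectlyDecomposable {X : Subgroup G // IsClosed (X : Set G)} ↔
      ∃ G₁ G₂ : Subgroup G, G₁ ≠ ⊥ ∧ G₂ ≠ ⊥ ∧
        IsClosed (G₁ : Set G) ∧ IsClosed (G₂ : Set G) ∧ G₁.Normal ∧ G₂.Normal ∧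
        G₁ ⊓ G₂ = ⊥ ∧ (G₁ : Set G) * (G₂ : Set G) = Set.univ ∧
        piStar ↥G₁ ∩ piStar ↥G₂ = ∅ := by
  refine (directlyDecomposable_iff_exists_isDirectDecomposition (L := ClosedSubgroups G)).trans
    ⟨fun ⟨a, b, h, ha, hb⟩ => ?_, fun ⟨G₁, G₂, h₁, h₂, hc₁, hc₂, hn₁, hn₂, hinf, hmul, hpi⟩ => ?_⟩
  · have hpi := h.piStar_inter_eq_empty
    exact ⟨a.1, b.1, mt ClosedSubgroups.coe_eq_bot_iff.mp ha,
      mt ClosedSubgroups.coe_eq_bot_iff.mp hb, a.2, b.2, h.normal hpi,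
      h.symm.normal (by rwa [Set.inter_comm]), h.coe_inf_coe_eq_bot, h.coe_mul_coe_eq_univ, hpi⟩
  · exact ⟨⟨G₁, hc₁⟩, ⟨G₂, hc₂⟩, isDirectDecomposition_of_normal hn₁ hn₂ hinf hmul hpi,
      mt ClosedSubgroups.coe_eq_bot_iff.mpr h₁, mt ClosedSubgroups.coe_eq_bot_iff.mpr h₂⟩

/-- The poset of closed subgroups of a profinite group `G` is directly
decomposable iff `G = G₁ × G₂` for nontrivial closed normal subgroups `G₁, G₂` with
`π*(G₁) ∩ π*(G₂) = ∅`. -/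
theorem closed_subgroup_poset_directlyDecomposable_iff
    {G : Type u} [Group G] [TopologicalSpace G] [IsTopologicalGroup G]
    [CompactSpace G] [T2Space G] [TotallyDisconnectedSpace G] :
    DirectlyDecomposable {X : Subgroup G // IsClosed (X : Set G)} ↔
      ∃ G₁ G₂ : Subgroup G, G₁ ≠ ⊥ ∧ G₂ ≠ ⊥ ∧
        IsClosed (G₁ : Set G) ∧ IsClosed (G₂ : Set G) ∧ G₁.Normal ∧ G₂.Normal ∧
        G₁ ⊓ G₂ = ⊥ ∧ (G₁ : Set G) * (G₂ : Set G) = Set.univ ∧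
        piStar ↥G₁ ∩ piStar ↥G₂ = ∅ :=
  closed_subgroup_poset_directlyDecomposable_iff_general
end

section
/- Let G be a profinite group and let w be a natural number. Then every antichain in the poset of open subgroups of G has at most w elements if and only if every antichain in the poset of closed subgroups of G has at most w elements. -/
/-! In a profinite group every closed subgroup is the intersection of the open subgroups
containing it, and these are closed under finite intersections. So a closed subgroup `K` of a
finite antichain `B` of closed subgroups can be enlarged to an open subgroup `u K` that still
contains no other member of `B`. Then `u` is injective on `B` and `u '' B` is an antichain of
open subgroups of the same size. The converse is immediate since open subgroups are closed. -/

section Order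

variable {α : Type*} [Preorder α] {B : Set α} {u : α → α}

theorem Set.injOn_of_le_self_of_not_le (hle : ∀ K ∈ B, K ≤ u K)
    (hsep : ∀ K ∈ B, ∀ H ∈ B, H ≠ K → ¬ H ≤ u K) : Set.InjOn u B := by
  intro K₁ h₁ K₂ h₂ he
  by_contra hne
  exact hsep K₂ h₂ K₁ h₁ hne (he ▸ hle K₁ h₁)

theorem isAntichain_image_of_le_self_of_not_le (hle : ∀ K ∈ B, K ≤ u K)
    (hsep : ∀ K ∈ B, ∀ H ∈ B, H ≠ K → ¬ H ≤ u K) : IsAntichain (· ≤ ·) (u '' B) := by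
  rintro _ ⟨K₁, h₁, rfl⟩ _ ⟨K₂, h₂, rfl⟩ hne hle'
  exact hsep K₂ h₂ K₁ h₁ (fun h => hne (h ▸ rfl)) ((hle K₁ h₁).trans hle')

end Order

theorem Set.finite_and_ncard_le_of_forall_subset_ncard_ne {α : Type*} {A : Set α} {w : ℕ}
    (h : ∀ B ⊆ A, B.ncard ≠ w + 1) : A.Finite ∧ A.ncard ≤ w := by
  rcases A.finite_or_infinite with hfin | hinf
  · refine ⟨hfin, not_lt.mp fun hlt => ?_⟩
    obtain ⟨B, hBA, hB⟩ := Set.exists_subset_card_eq (Nat.succ_le_of_lt hlt)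
    exact (h B hBA hB).elim
  · obtain ⟨B, hBA, -, hB⟩ := hinf.exists_subset_ncard_eq (w + 1)
    exact (h B hBA hB).elim

namespace ProfiniteGrp

variable {G : Type*} [Group G] [TopologicalSpace G] [IsTopologicalGroup G] [CompactSpace G]
  [TotallyDisconnectedSpace G]

theorem exists_isOpen_le_not_le {H K : Subgroup G} (hK : IsClosed (K : Set G)) (hHK : ¬ H ≤ K) :
    ∃ U : Subgroup G, IsOpen (U : Set G) ∧ K ≤ U ∧ ¬ H ≤ U := by
  by_contra! hle
  exact hHK <| (le_sInf fun U hU => hle U hU.1 hU.2).trans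
    (closedSubgroup_eq_sInf_open ⟨K, hK⟩).ge

theorem exists_isOpen_le_forall_not_le {K : Subgroup G} (hK : IsClosed (K : Set G))
    {S : Set (Subgroup G)} (hS : S.Finite) (hSK : ∀ H ∈ S, ¬ H ≤ K) :
    ∃ U : Subgroup G, IsOpen (U : Set G) ∧ K ≤ U ∧ ∀ H ∈ S, ¬ H ≤ U := by
  induction S, hS using Set.Finite.induction_on with
  | empty => exact ⟨⊤, isOpen_univ, le_top, by simp⟩
  | @insert H₀ S _ _ ih =>
    obtain ⟨U, hU, hKU, hSU⟩ := ih fun H hH => hSK H (Set.mem_insert_of_mem _ hH)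
    obtain ⟨V, hV, hKV, hH₀V⟩ := exists_isOpen_le_not_le hK (hSK H₀ (Set.mem_insert _ _))
    refine ⟨U ⊓ V, hU.inter hV, le_inf hKU hKV, ?_⟩
    rintro H (rfl | hH) hle
    exacts [hH₀V (hle.trans inf_le_right), hSU H hH (hle.trans inf_le_left)]

end ProfiniteGrp

open ProfiniteGrp in
theorem open_antichains_bounded_iff_closed_antichains_bounded_general
    {G : Type*} [Group G] [TopologicalSpace G] [IsTopologicalGroup G]
    [CompactSpace G] [TotallyDisconnectedSpace G] (w : ℕ) :
    (∀ A : Set (Subgroup G), (∀ X ∈ A, IsOpen (X : Set G)) →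
        IsAntichain (· ≤ ·) A → A.Finite ∧ A.ncard ≤ w) ↔
      (∀ A : Set (Subgroup G), (∀ X ∈ A, IsClosed (X : Set G)) →
        IsAntichain (· ≤ ·) A → A.Finite ∧ A.ncard ≤ w) := by
  refine ⟨fun hopen A hA hanti => Set.finite_and_ncard_le_of_forall_subset_ncard_ne
    fun B hBA hB => ?_, fun hclosed A hA => hclosed A fun X hX => X.isClosed_of_isOpen (hA X hX)⟩
  have hBfin : B.Finite := Set.finite_of_ncard_pos (by omega)
  have hsep : ∀ K ∈ B, ∃ U : Subgroup G, IsOpen (U : Set G) ∧ K ≤ U ∧ ∀ H ∈ B \ {K}, ¬ H ≤ U :=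
    fun K hK => exists_isOpen_le_forall_not_le (hA K (hBA hK)) hBfin.sdiff
      fun H hH => hanti (hBA hH.1) (hBA hK) hH.2
  choose! u hu_open hu_le hu_sep using hsep
  have hu_sep' : ∀ K ∈ B, ∀ H ∈ B, H ≠ K → ¬ H ≤ u K := fun K hK H hH hne => hu_sep K hK H ⟨hH, hne⟩
  have hbound := (hopen (u '' B) (Set.forall_mem_image.2 hu_open)
    (isAntichain_image_of_le_self_of_not_le hu_le hu_sep')).2
  rw [(Set.injOn_of_le_self_of_not_le hu_le hu_sep').ncard_image, hB] at hbound
  omega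

/-- Let `G` be a profinite group and `w` a natural number. Every antichain
in the poset of open subgroups of `G` has at most `w` elements iff every antichain in the
poset of closed subgroups of `G` has at most `w` elements. -/
theorem open_antichains_bounded_iff_closed_antichains_bounded
    {G : Type*} [Group G] [TopologicalSpace G] [IsTopologicalGroup G]
    [CompactSpace G] [T2Space G] [TotallyDisconnectedSpace G] (w : ℕ) :
    (∀ A : Set (Subgroup G), (∀ X ∈ A, IsOpen (X : Set G)) →
        IsAntichain (· ≤ ·) A → A.Finite ∧ A.ncard ≤ w) ↔
      (∀ A : Set (Subgroup G), (∀ X ∈ A, IsClosed (X : Set G)) →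
        IsAntichain (· ≤ ·) A → A.Finite ∧ A.ncard ≤ w) :=
  open_antichains_bounded_iff_closed_antichains_bounded_general w
end

section
/- Let G be a profinite group. The following are equivalent: (1) for all closed subgroups X, Y, Z of G with X ⊆ Z, the topological closure of the subgroup generated by X and Y ∩ Z equals the intersection of Z with the topological closure of the subgroup generated by X and Y; (2) for all open subgroups X, Y, Z of G with X ⊆ Z, the subgroup generated by X and Y ∩ Z equals the intersection of Z with the subgroup generated by X and Y. -/
/-!
In a profinite group the closure of a subgroup `H` is `⨅ N, H ⊔ N` over the open normal
subgroups `N`. Given open-lattice modularity, closed `X ≤ Z`, `Y` and an open normal `M`,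
compactness yields an open normal `N ≤ M` with `(Y ⊔ N) ⊓ (Z ⊔ N) ≤ (Y ⊓ Z) ⊔ M`, because these
closed sets shrink to `Y ⊓ Z` inside the open set `(Y ⊓ Z) ⊔ M`; the modular
law for the open subgroups `X ⊔ N`, `Y ⊔ N`, `Z ⊔ N` then gives
`((X ⊔ Y) ⊔ N) ⊓ Z ≤ (X ⊔ (Y ⊓ Z)) ⊔ M`, and intersecting over `M` is the nontrivial inclusion
of the closed modular law. Conversely, joins of open subgroups are open, hence closed.
-/

instance OpenNormalSubgroup.instNonempty {G : Type*} [Group G] [TopologicalSpace G] :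
    Nonempty (OpenNormalSubgroup G) :=
  ⟨⟨⊤, ⟨fun _ _ _ ↦ trivial⟩⟩⟩

namespace Subgroup

variable {G : Type*} [Group G] [TopologicalSpace G] [IsTopologicalGroup G]

theorem topologicalClosure_eq_self_of_isClosed {H : Subgroup G} (hH : IsClosed (H : Set G)) :
    H.topologicalClosure = H :=
  SetLike.ext' <| by rw [topologicalClosure_coe, hH.closure_eq]

theorem topologicalClosure_eq_self_of_isOpen {H : Subgroup G} (hH : IsOpen (H : Set G)) :
    H.topologicalClosure = H :=
  topologicalClosure_eq_self_of_isClosed (isClosed_of_isOpen H hH)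

theorem isOpen_sup_of_isOpen_left {H K : Subgroup G} (hH : IsOpen (H : Set G)) :
    IsOpen ((H ⊔ K : Subgroup G) : Set G) :=
  isOpen_mono le_sup_left hH

theorem isOpen_sup_openNormalSubgroup (H : Subgroup G) (N : OpenNormalSubgroup G) :
    IsOpen ((H ⊔ N : Subgroup G) : Set G) :=
  isOpen_mono le_sup_right N.isOpen

theorem topologicalClosure_sup_inf_le {X Y Z : Subgroup G} (hZ : IsClosed (Z : Set G))
    (hXZ : X ≤ Z) : (X ⊔ (Y ⊓ Z)).topologicalClosure ≤ (X ⊔ Y).topologicalClosure ⊓ Z :=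
  topologicalClosure_minimal _
    (le_inf ((sup_le_sup_left inf_le_left X).trans (le_topologicalClosure _))
      (sup_le hXZ inf_le_right))
    ((isClosed_topologicalClosure _).inter hZ)

variable [CompactSpace G] [TotallyDisconnectedSpace G]

theorem topologicalClosure_eq_iInf_sup_openNormalSubgroup (H : Subgroup G) :
    H.topologicalClosure = ⨅ N : OpenNormalSubgroup G, H ⊔ N := by
  refine le_antisymm (le_iInf fun N ↦ topologicalClosure_minimal H le_sup_left
    (isClosed_of_isOpen _ (isOpen_sup_openNormalSubgroup H N))) ?_
  calc ⨅ N : OpenNormalSubgroup G, H ⊔ N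
      ≤ sInf {K : Subgroup G | IsOpen (K : Set G) ∧ H.topologicalClosure ≤ K} := by
        refine le_sInf fun K ⟨hK, hHK⟩ ↦ ?_
        obtain ⟨N, hNK⟩ := ProfiniteGrp.exist_openNormalSubgroup_sub_open_nhds_of_one hK K.one_mem
        exact (iInf_le _ N).trans (sup_le ((le_topologicalClosure H).trans hHK) hNK)
    _ = H.topologicalClosure :=
        (ProfiniteGrp.closedSubgroup_eq_sInf_open ⟨_, isClosed_topologicalClosure H⟩).symm

theorem iInf_sup_openNormalSubgroup_eq_self {H : Subgroup G} (hH : IsClosed (H : Set G)) :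
    ⨅ N : OpenNormalSubgroup G, H ⊔ N = H :=
  (topologicalClosure_eq_iInf_sup_openNormalSubgroup H).symm.trans
    (topologicalClosure_eq_self_of_isClosed hH)

theorem exists_openNormalSubgroup_sup_inf_sup_le {Y Z : Subgroup G}
    (hY : IsClosed (Y : Set G)) (hZ : IsClosed (Z : Set G)) (M : OpenNormalSubgroup G) :
    ∃ N : OpenNormalSubgroup G, (N : Subgroup G) ≤ M ∧
      (Y ⊔ N) ⊓ (Z ⊔ N) ≤ (Y ⊓ Z) ⊔ M := by
  set V : OpenNormalSubgroup G → Set G := fun N ↦ ((Y ⊔ N) ⊓ (Z ⊔ N) : Subgroup G)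
  have hV_mono : Monotone V := fun N₁ N₂ (h : (N₁ : Subgroup G) ≤ N₂) ↦
    inf_le_inf (sup_le_sup_left h Y) (sup_le_sup_left h Z)
  have hV_closed (N : OpenNormalSubgroup G) : IsClosed (V N) :=
    (isClosed_of_isOpen _ (isOpen_sup_openNormalSubgroup Y N)).inter
      (isClosed_of_isOpen _ (isOpen_sup_openNormalSubgroup Z N))
  have hV_iInter : ⋂ N, V N ⊆ ((Y ⊓ Z : Subgroup G) : Set G) := by
    intro g hg
    exact ⟨(iInf_sup_openNormalSubgroup_eq_self hY).le
        (mem_iInf.mpr fun N ↦ (Set.mem_iInter.mp hg N).1),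
      (iInf_sup_openNormalSubgroup_eq_self hZ).le
        (mem_iInf.mpr fun N ↦ (Set.mem_iInter.mp hg N).2)⟩
  have hU_open := isOpen_sup_openNormalSubgroup (Y ⊓ Z) M
  obtain ⟨N, hN⟩ := exists_subset_nhds_of_isCompact' hV_mono.directed_ge
    (fun N ↦ (hV_closed N).isCompact) hV_closed
    (fun g hg ↦ hU_open.mem_nhds (mem_sup_left (hV_iInter hg)))
  exact ⟨N ⊓ M, inf_le_right, (hV_mono inf_le_left).trans hN⟩

theorem inf_le_topologicalClosure_sup_inf_of_isOpen_modular
    (hmod : ∀ X Y Z : Subgroup G, IsOpen (X : Set G) → IsOpen (Y : Set G) →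
      IsOpen (Z : Set G) → X ≤ Z → X ⊔ (Y ⊓ Z) = (X ⊔ Y) ⊓ Z)
    {X Y Z : Subgroup G} (hY : IsClosed (Y : Set G)) (hZ : IsClosed (Z : Set G)) (hXZ : X ≤ Z) :
    (X ⊔ Y).topologicalClosure ⊓ Z ≤ (X ⊔ (Y ⊓ Z)).topologicalClosure := by
  rw [topologicalClosure_eq_iInf_sup_openNormalSubgroup,
    topologicalClosure_eq_iInf_sup_openNormalSubgroup]
  refine le_iInf fun M ↦ ?_
  obtain ⟨N, hNM, hN⟩ := exists_openNormalSubgroup_sup_inf_sup_le hY hZ M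
  calc (⨅ N : OpenNormalSubgroup G, X ⊔ Y ⊔ N) ⊓ Z
      ≤ ((X ⊔ N) ⊔ (Y ⊔ N)) ⊓ (Z ⊔ N) :=
        inf_le_inf ((iInf_le _ N).trans (sup_le (sup_le_sup le_sup_left le_sup_left)
          (le_sup_right.trans le_sup_right))) le_sup_left
    _ = (X ⊔ N) ⊔ ((Y ⊔ N) ⊓ (Z ⊔ N)) :=
        (hmod _ _ _ (isOpen_sup_openNormalSubgroup X N) (isOpen_sup_openNormalSubgroup Y N)
          (isOpen_sup_openNormalSubgroup Z N) (sup_le_sup_right hXZ _)).symm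
    _ ≤ X ⊔ (Y ⊓ Z) ⊔ M :=
        sup_le (sup_le_sup le_sup_left hNM) (hN.trans (sup_le_sup_right le_sup_right _))

end Subgroup

open Subgroup in
theorem closed_lattice_modular_iff_open_lattice_modular_general
    {G : Type*} [Group G] [TopologicalSpace G] [IsTopologicalGroup G]
    [CompactSpace G] [TotallyDisconnectedSpace G] :
    (∀ X Y Z : Subgroup G,
        IsClosed (X : Set G) → IsClosed (Y : Set G) → IsClosed (Z : Set G) → X ≤ Z →
        (X ⊔ (Y ⊓ Z)).topologicalClosure = (X ⊔ Y).topologicalClosure ⊓ Z) ↔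
      (∀ X Y Z : Subgroup G,
        IsOpen (X : Set G) → IsOpen (Y : Set G) → IsOpen (Z : Set G) → X ≤ Z →
        X ⊔ (Y ⊓ Z) = (X ⊔ Y) ⊓ Z) := by
  constructor
  · intro hclosed X Y Z hX hY hZ hXZ
    have h := hclosed X Y Z (isClosed_of_isOpen _ hX) (isClosed_of_isOpen _ hY)
      (isClosed_of_isOpen _ hZ) hXZ
    rwa [topologicalClosure_eq_self_of_isOpen (isOpen_sup_of_isOpen_left hX),
      topologicalClosure_eq_self_of_isOpen (isOpen_sup_of_isOpen_left hX)] at h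
  · intro hopen X Y Z _ hY hZ hXZ
    exact le_antisymm (topologicalClosure_sup_inf_le hZ hXZ)
      (inf_le_topologicalClosure_sup_inf_of_isOpen_modular hopen hY hZ hXZ)

/-- For a profinite group `G`, the closed subgroup lattice of `G` is
modular iff the open subgroup lattice of `G` is modular. -/
theorem closed_lattice_modular_iff_open_lattice_modular
    {G : Type*} [Group G] [TopologicalSpace G] [IsTopologicalGroup G]
    [CompactSpace G] [T2Space G] [TotallyDisconnectedSpace G] :
    (∀ X Y Z : Subgroup G,
        IsClosed (X : Set G) → IsClosed (Y : Set G) → IsClosed (Z : Set G) → X ≤ Z →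
        (X ⊔ (Y ⊓ Z)).topologicalClosure = (X ⊔ Y).topologicalClosure ⊓ Z) ↔
      (∀ X Y Z : Subgroup G,
        IsOpen (X : Set G) → IsOpen (Y : Set G) → IsOpen (Z : Set G) → X ≤ Z →
        X ⊔ (Y ⊓ Z) = (X ⊔ Y) ⊓ Z) :=
  closed_lattice_modular_iff_open_lattice_modular_general
end

section
/- Let G be a profinite group. Then HK = KH (as subsets of G) for every pair of closed subgroups H, K of G if and only if HK = KH for every pair of open subgroups H, K of G. -/
/-!
If `x ∈ HK`, then for every open normal subgroup `N` the open subgroups `HN` and `KN` permute, so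
`x ∈ (HN)(KN) = (KN)(HN) = KHN`. In a profinite group the open normal subgroups form a basis of
neighbourhoods of `1`, so `x` lies in the closure of `KH`, which is compact and hence closed.
-/

open scoped Pointwise

theorem Subgroup.coe_sup_normal_mul_coe_sup_normal {G : Type*} [Group G] (H K N : Subgroup G)
    [N.Normal] : ((H ⊔ N : Subgroup G) : Set G) * (K ⊔ N : Subgroup G) = H * K * N := by
  rw [Subgroup.mul_normal, Subgroup.mul_normal, mul_assoc, ← mul_assoc (N : Set G),
    ← Subgroup.set_mul_normal_comm (K : Set G) N, mul_assoc, coe_mul_coe, ← mul_assoc]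

namespace ProfiniteGrp

variable {G : Type*} [Group G] [TopologicalSpace G] [IsTopologicalGroup G] [CompactSpace G]
  [TotallyDisconnectedSpace G]

theorem mem_closure_iff_forall_mem_mul_openNormalSubgroup {s : Set G} {x : G} :
    x ∈ closure s ↔ ∀ N : OpenNormalSubgroup G, x ∈ s * (N : Set G) := by
  refine ⟨fun hx N ↦ closure_subset_mul_right_of_mem_nhds_one_of_inv s
    (N.isOpen.mem_nhds N.one_mem') (fun _ ↦ inv_mem) hx, fun hx ↦ ?_⟩
  refine mem_closure_iff_nhds_one.mpr fun U hU ↦ ?_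
  obtain ⟨V, hVU, hV, h1V⟩ := mem_nhds_iff.mp hU
  obtain ⟨N, hNV⟩ := exist_openNormalSubgroup_sub_open_nhds_of_one hV h1V
  obtain ⟨y, hy, n, hn, rfl⟩ := hx N
  have hconj : y * n⁻¹ * y⁻¹ ∈ N.toSubgroup := N.isNormal'.conj_mem _ (inv_mem hn) y
  exact ⟨y, hy, hVU (hNV (by simp only [div_eq_mul_inv, mul_inv_rev, ← mul_assoc]; exact hconj))⟩

theorem mul_subset_closure_mul_of_open_subgroups_permute
    (hopen : ∀ H K : Subgroup G, IsOpen (H : Set G) → IsOpen (K : Set G) →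
      (H : Set G) * (K : Set G) = (K : Set G) * (H : Set G))
    (H K : Subgroup G) : (H : Set G) * K ⊆ closure ((K : Set G) * H) := by
  intro x hx
  refine mem_closure_iff_forall_mem_mul_openNormalSubgroup.mpr fun N ↦ ?_
  have hxN : x ∈ ((H ⊔ N.toSubgroup : Subgroup G) : Set G) * (K ⊔ N.toSubgroup : Subgroup G) :=
    Set.mul_subset_mul (SetLike.coe_subset_coe.mpr le_sup_left)
      (SetLike.coe_subset_coe.mpr le_sup_left) hx
  rwa [hopen _ _ (Subgroup.isOpen_mono le_sup_right N.isOpen)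
    (Subgroup.isOpen_mono le_sup_right N.isOpen),
    Subgroup.coe_sup_normal_mul_coe_sup_normal] at hxN

end ProfiniteGrp

/-- In a profinite group `G`, every pair of closed subgroups permutes
iff every pair of open subgroups permutes. -/
theorem closed_subgroups_permute_iff_open_subgroups_permute
    {G : Type*} [Group G] [TopologicalSpace G] [IsTopologicalGroup G]
    [CompactSpace G] [T2Space G] [TotallyDisconnectedSpace G] :
    (∀ H K : Subgroup G, IsClosed (H : Set G) → IsClosed (K : Set G) →
        (H : Set G) * (K : Set G) = (K : Set G) * (H : Set G)) ↔
      (∀ H K : Subgroup G, IsOpen (H : Set G) → IsOpen (K : Set G) →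
        (H : Set G) * (K : Set G) = (K : Set G) * (H : Set G)) := by
  refine ⟨fun hclosed H K hH hK ↦
    hclosed H K (H.isClosed_of_isOpen hH) (K.isClosed_of_isOpen hK), fun hopen ↦ ?_⟩
  have hsubset : ∀ H K : Subgroup G, IsClosed (H : Set G) → IsClosed (K : Set G) →
      (H : Set G) * K ⊆ K * H := fun H K hH hK ↦ by
    simpa only [(hK.isCompact.mul hH.isCompact).isClosed.closure_eq] using
      ProfiniteGrp.mul_subset_closure_mul_of_open_subgroups_permute hopen H K
  exact fun H K hH hK ↦ (hsubset H K hH hK).antisymm (hsubset K H hK hH)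
end
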